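/- arXiv:2408.16404 — 3 statements merged into one kernel-verified Lean document; each statement's English description precedes it below -/
import Mathlib

section
/- Let F : [a,b] → ℝ be continuous and suppose there is a countable set C ⊆ [a,b] such that F is differentiable at every point of [a,b] \ C. Define f : [a,b] → ℝ by f(t) = F′(t) for t ∈ [a,b] \ C and f(t) = 0 for t ∈ C. Then for every t ∈ [a,b], f is Henstock–Kurzweil integrable on [a,t] with HK ∫_a^t f(s) ds = F(t) − F(a). -/
/-- A tagged partition of the compact interval `[a, b]`:
points `a = t 0 ≤ t 1 ≤ … ≤ t n = b` together with tags `tag i ∈ [t i, t (i+1)]`. -/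
structure TaggedPartition (a b : ℝ) where
  n : ℕ
  t : ℕ → ℝ
  tag : ℕ → ℝ
  first : t 0 = a
  last : t n = b
  mono : ∀ i < n, t i ≤ t (i + 1)
  tag_mem : ∀ i < n, tag i ∈ Set.Icc (t i) (t (i + 1))

/-- A tagged partition is `δ`-fine if each subinterval `[t i, t (i+1)]` is contained in
`(tag i - δ (tag i), tag i + δ (tag i))`. -/
def TaggedPartition.IsFine {a b : ℝ} (δ : ℝ → ℝ) (P : TaggedPartition a b) : Prop :=
  ∀ i < P.n, Set.Icc (P.t i) (P.t (i + 1)) ⊆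
    Set.Ioo (P.tag i - δ (P.tag i)) (P.tag i + δ (P.tag i))

/-- The Riemann sum `Σ_i f(τ_i) (t_{i+1} - t_i)` associated with a tagged partition. -/
noncomputable def TaggedPartition.riemannSum {a b : ℝ} {X : Type*}
    [AddCommGroup X] [Module ℝ X] (P : TaggedPartition a b) (f : ℝ → X) : X :=
  ∑ i ∈ Finset.range P.n, (P.t (i + 1) - P.t i) • f (P.tag i)

/-- `f` is Henstock–Kurzweil integrable on `[a, b]` with integral `I`. -/
def HasHKIntegral {X : Type*} [NormedAddCommGroup X] [NormedSpace ℝ X]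
    (a b : ℝ) (f : ℝ → X) (I : X) : Prop :=
  ∀ ε > 0, ∃ δ : ℝ → ℝ, (∀ x ∈ Set.Icc a b, 0 < δ x) ∧
    ∀ P : TaggedPartition a b, P.IsFine δ → ‖P.riemannSum f - I‖ < ε

/-- Monotonicity of partition points. -/
lemma TaggedPartition.t_le {a b : ℝ} (P : TaggedPartition a b) :
    ∀ j ≤ P.n, ∀ i ≤ j, P.t i ≤ P.t j := by
  intro j
  induction j with
  | zero => intro _ i hi; simp [Nat.le_zero.mp hi]
  | succ k ih =>
    intro hk i hi
    rcases eq_or_lt_of_le hi with h | h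
    · rw [h]
    · exact le_trans (ih (by omega) i (by omega)) (P.mono k (by omega))

/-- if `F` is continuous on `[a, b]` and differentiable off a countable set
`C ⊆ [a, b]`, and `f` equals `F′` off `C` and `0` on `C`, then for every `t ∈ [a, b]`,
`f` is Henstock–Kurzweil integrable on `[a, t]` with integral `F t - F a`. -/
theorem hk_fundamental_theorem_countable_exceptional_set
    (a b : ℝ) (hab : a ≤ b) (F f : ℝ → ℝ) (C : Set ℝ)
    (hC : C.Countable) (hCsub : C ⊆ Set.Icc a b)
    (hF : ContinuousOn F (Set.Icc a b))
    (hderiv : ∀ x ∈ Set.Icc a b \ C, HasDerivWithinAt F (f x) (Set.Icc a b) x)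
    (hf0 : ∀ x ∈ C, f x = 0) :
    ∀ t ∈ Set.Icc a b, HasHKIntegral a t f (F t - F a) := by
  classical
  intro tt htt ε hε
  obtain ⟨K, hK⟩ : ∃ K : ℝ → ℕ, Set.InjOn K C := Set.countable_iff_exists_injOn.mp hC
  set ε' : ℝ := ε / (4 * (b - a) + 4) with hε'def
  have hba : (0:ℝ) ≤ b - a := by linarith
  have hε' : 0 < ε' := div_pos hε (by linarith)
  -- gauges from continuity at points of C
  have hcont : ∀ x : ℝ, ∃ d > 0, x ∈ C → ∀ y ∈ Set.Icc a b, |y - x| < d →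
      |F y - F x| < ε / 16 * (1 / 2) ^ (2 * K x) := by
    intro x
    by_cases hx : x ∈ C
    · have h := Metric.continuousWithinAt_iff.mp (hF x (hCsub hx))
      obtain ⟨d, hd, hball⟩ := h (ε / 16 * (1 / 2) ^ (2 * K x)) (by positivity)
      refine ⟨d, hd, fun _ y hy hyd => ?_⟩
      have := hball hy (by simpa [Real.dist_eq] using hyd)
      simpa [Real.dist_eq] using this
    · exact ⟨1, one_pos, fun h => absurd h hx⟩
  -- gauges from differentiability off C
  have hder : ∀ x : ℝ, ∃ d > 0, x ∈ Set.Icc a b \ C → ∀ y ∈ Set.Icc a b, |y - x| < d →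
      |F y - F x - (y - x) * f x| ≤ ε' * |y - x| := by
    intro x
    by_cases hx : x ∈ Set.Icc a b \ C
    · have h := (hasDerivWithinAt_iff_isLittleO.mp (hderiv x hx)).def hε'
      rw [Metric.nhdsWithin_basis_ball.eventually_iff] at h
      obtain ⟨d, hd, hball⟩ := h
      refine ⟨d, hd, fun _ y hy hyd => ?_⟩
      have := hball ⟨by simpa [Metric.mem_ball, Real.dist_eq] using hyd, hy⟩
      simpa [Real.norm_eq_abs, smul_eq_mul, mul_comm] using this
    · exact ⟨1, one_pos, fun h => absurd h hx⟩
  choose δ1 hδ1pos hδ1 using hcont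
  choose δ2 hδ2pos hδ2 using hder
  refine ⟨fun x => min (δ1 x) (δ2 x), fun x _ => lt_min (hδ1pos x) (hδ2pos x), ?_⟩
  intro P hP
  have httb : Set.Icc a tt ⊆ Set.Icc a b := Set.Icc_subset_Icc le_rfl htt.2
  have htmem : ∀ i ≤ P.n, P.t i ∈ Set.Icc a tt := by
    intro i hi
    constructor
    · have h := P.t_le i hi 0 (Nat.zero_le i); rwa [P.first] at h
    · have h := P.t_le P.n le_rfl i hi; rwa [P.last] at h
  have htag : ∀ i < P.n, P.tag i ∈ Set.Icc a tt := fun i hi =>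
    ⟨le_trans (htmem i hi.le).1 (P.tag_mem i hi).1,
     le_trans (P.tag_mem i hi).2 (htmem (i+1) hi).2⟩
  have hdist : ∀ i < P.n, ∀ y ∈ Set.Icc (P.t i) (P.t (i+1)),
      |y - P.tag i| < min (δ1 (P.tag i)) (δ2 (P.tag i)) := by
    intro i hi y hy
    have h := hP i hi hy
    rw [abs_sub_lt_iff]
    constructor <;> [linarith [h.2]; linarith [h.1]]
  -- rewrite difference as a sum of local errors
  have hsum : P.riemannSum f - (F tt - F a) =
      ∑ i ∈ Finset.range P.n,
        ((P.t (i+1) - P.t i) * f (P.tag i) - (F (P.t (i+1)) - F (P.t i))) := by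
    unfold TaggedPartition.riemannSum
    rw [Finset.sum_sub_distrib, Finset.sum_range_sub (fun i => F (P.t i)) P.n,
      P.first, P.last]
    simp [smul_eq_mul]
  rw [hsum]
  set g : ℕ → ℝ :=
    fun i => (P.t (i+1) - P.t i) * f (P.tag i) - (F (P.t (i+1)) - F (P.t i)) with hg
  have hnorm : ‖∑ i ∈ Finset.range P.n, g i‖ ≤ ∑ i ∈ Finset.range P.n, |g i| := by
    simpa [Real.norm_eq_abs] using norm_sum_le (Finset.range P.n) g
  set p : ℕ → Prop := fun i => P.tag i ∈ C ∧ P.t i < P.t (i+1) with hp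
  set S : Finset ℕ := (Finset.range P.n).filter p with hS
  set T : Finset ℕ := (Finset.range P.n).filter (fun i => ¬ p i) with hT
  have hsplit : ∑ i ∈ Finset.range P.n, |g i| = ∑ i ∈ S, |g i| + ∑ i ∈ T, |g i| :=
    (Finset.sum_filter_add_sum_filter_not _ _ _).symm
  -- The exceptional part
  set φ : ℕ → ℕ := fun i => 2 * K (P.tag i) + (if P.t (i+1) = P.tag i then 0 else 1) with hφ
  have hφinj : ∀ i ∈ S, ∀ j ∈ S, φ i = φ j → i = j := by
    have main : ∀ i ∈ S, ∀ j ∈ S, i < j → φ i = φ j → False := by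
      intro i hiS j hjS hij hphi
      simp only [hS, Finset.mem_filter, Finset.mem_range, hp] at hiS hjS
      obtain ⟨hi, hiC, hilt⟩ := hiS
      obtain ⟨hj, hjC, hjlt⟩ := hjS
      have hbi : (if P.t (i+1) = P.tag i then 0 else 1) ≤ 1 := by split <;> omega
      have hbj : (if P.t (j+1) = P.tag j then 0 else 1) ≤ 1 := by split <;> omega
      have hphi' : 2 * K (P.tag i) + (if P.t (i+1) = P.tag i then (0:ℕ) else 1)
          = 2 * K (P.tag j) + (if P.t (j+1) = P.tag j then (0:ℕ) else 1) := hphi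
      have hKeq : K (P.tag i) = K (P.tag j) := by omega
      have htageq : P.tag i = P.tag j := hK hiC hjC hKeq
      have h1 : P.t (i+1) ≤ P.t j := P.t_le j hj.le (i+1) hij
      have h2 : P.tag i ≤ P.t (i+1) := (P.tag_mem i hi).2
      have h3 : P.t j ≤ P.tag j := (P.tag_mem j hj).1
      have h4 : P.t (i+1) = P.tag i := by rw [htageq] at h2 ⊢; linarith
      have h5 : P.t j = P.tag j := by linarith [htageq ▸ h2]
      have hiteeq : (if P.t (i+1) = P.tag i then (0:ℕ) else 1)
          = (if P.t (j+1) = P.tag j then (0:ℕ) else 1) := by omega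
      rw [if_pos h4] at hiteeq
      have h6 : P.t (j+1) = P.tag j := by
        by_contra hne
        rw [if_neg hne] at hiteeq
        omega
      rw [h5, h6] at hjlt
      exact lt_irrefl _ hjlt
    intro i hi j hj hphi
    rcases lt_trichotomy i j with h | h | h
    · exact absurd (main i hi j hj h hphi) (fun x => x)
    · exact h
    · exact absurd (main j hj i hi h hphi.symm) (fun x => x)
  have htermS : ∀ i ∈ S, |g i| ≤ ε / 4 * (1/2 : ℝ) ^ (φ i) := by
    intro i hiS
    simp only [hS, Finset.mem_filter, Finset.mem_range, hp] at hiS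
    obtain ⟨hi, hiC, _⟩ := hiS
    have hf : f (P.tag i) = 0 := hf0 _ hiC
    have hmem1 : P.t (i+1) ∈ Set.Icc (P.t i) (P.t (i+1)) :=
      ⟨P.mono i hi, le_rfl⟩
    have hmem0 : P.t i ∈ Set.Icc (P.t i) (P.t (i+1)) := ⟨le_rfl, P.mono i hi⟩
    have h1 := hδ1 (P.tag i) hiC (P.t (i+1)) (httb (htmem (i+1) hi))
      (lt_of_lt_of_le (hdist i hi _ hmem1) (min_le_left _ _))
    have h2 := hδ1 (P.tag i) hiC (P.t i) (httb (htmem i hi.le))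
      (lt_of_lt_of_le (hdist i hi _ hmem0) (min_le_left _ _))
    have hgi : |g i| ≤ ε / 8 * (1/2 : ℝ) ^ (2 * K (P.tag i)) := by
      have : g i = -((F (P.t (i+1)) - F (P.tag i)) - (F (P.t i) - F (P.tag i))) := by
        simp only [hg, hf]; ring
      rw [this, abs_neg]
      calc |(F (P.t (i+1)) - F (P.tag i)) - (F (P.t i) - F (P.tag i))|
          ≤ |F (P.t (i+1)) - F (P.tag i)| + |F (P.t i) - F (P.tag i)| := abs_sub _ _
        _ ≤ ε / 8 * (1/2 : ℝ) ^ (2 * K (P.tag i)) := by linarith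
    have hφle : φ i ≤ 2 * K (P.tag i) + 1 := by simp only [hφ]; split <;> omega
    have hpow : (1/2 : ℝ) ^ (2 * K (P.tag i) + 1) ≤ (1/2 : ℝ) ^ (φ i) :=
      pow_le_pow_of_le_one (by norm_num) (by norm_num) hφle
    have hps : (1/2 : ℝ) ^ (2 * K (P.tag i) + 1)
        = (1/2 : ℝ) ^ (2 * K (P.tag i)) * (1/2) := pow_succ _ _
    nlinarith [pow_nonneg (by norm_num : (0:ℝ) ≤ 1/2) (2 * K (P.tag i))]
  have hSbound : ∑ i ∈ S, |g i| ≤ ε / 2 := by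
    have h1 : ∑ i ∈ S, |g i| ≤ ∑ i ∈ S, ε / 4 * (1/2 : ℝ) ^ (φ i) :=
      Finset.sum_le_sum htermS
    have h2 : ∑ i ∈ S, (1/2 : ℝ) ^ (φ i) = ∑ m ∈ S.image φ, (1/2 : ℝ) ^ m :=
      (Finset.sum_image hφinj).symm
    have h3 : ∑ m ∈ S.image φ, (1/2 : ℝ) ^ m ≤ 2 := by
      calc ∑ m ∈ S.image φ, (1/2 : ℝ) ^ m
          ≤ ∑' m : ℕ, (1/2 : ℝ) ^ m :=
            Summable.sum_le_tsum _ (fun m _ => by positivity) summable_geometric_two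
        _ = 2 := tsum_geometric_two
    calc ∑ i ∈ S, |g i| ≤ ∑ i ∈ S, ε / 4 * (1/2 : ℝ) ^ (φ i) := h1
      _ = ε / 4 * ∑ i ∈ S, (1/2 : ℝ) ^ (φ i) := by rw [Finset.mul_sum]
      _ ≤ ε / 4 * 2 := by rw [h2]; nlinarith
      _ = ε / 2 := by ring
  -- The differentiable part
  have htermT : ∀ i ∈ T, |g i| ≤ ε' * (P.t (i+1) - P.t i) := by
    intro i hiT
    simp only [hT, Finset.mem_filter, Finset.mem_range, hp, not_and, not_lt] at hiT
    obtain ⟨hi, hnp⟩ := hiT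
    by_cases hiC : P.tag i ∈ C
    · have heq : P.t i = P.t (i+1) := le_antisymm (P.mono i hi) (hnp hiC)
      have : g i = 0 := by simp [hg, ← heq]
      rw [this, ← heq]
      simp
    · have hcmem : P.tag i ∈ Set.Icc a b \ C := ⟨httb (htag i hi), hiC⟩
      have hmem1 : P.t (i+1) ∈ Set.Icc (P.t i) (P.t (i+1)) := ⟨P.mono i hi, le_rfl⟩
      have hmem0 : P.t i ∈ Set.Icc (P.t i) (P.t (i+1)) := ⟨le_rfl, P.mono i hi⟩
      have h1 := hδ2 (P.tag i) hcmem (P.t (i+1)) (httb (htmem (i+1) hi))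
        (lt_of_lt_of_le (hdist i hi _ hmem1) (min_le_right _ _))
      have h2 := hδ2 (P.tag i) hcmem (P.t i) (httb (htmem i hi.le))
        (lt_of_lt_of_le (hdist i hi _ hmem0) (min_le_right _ _))
      have ha1 : |P.t (i+1) - P.tag i| = P.t (i+1) - P.tag i :=
        abs_of_nonneg (by linarith [(P.tag_mem i hi).2])
      have ha2 : |P.t i - P.tag i| = P.tag i - P.t i := by
        rw [abs_sub_comm]; exact abs_of_nonneg (by linarith [(P.tag_mem i hi).1])
      rw [ha1] at h1; rw [ha2] at h2
      have hrw : g i =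
          (F (P.t i) - F (P.tag i) - (P.t i - P.tag i) * f (P.tag i)) -
          (F (P.t (i+1)) - F (P.tag i) - (P.t (i+1) - P.tag i) * f (P.tag i)) := by
        simp only [hg]; ring
      calc |g i| ≤ |F (P.t i) - F (P.tag i) - (P.t i - P.tag i) * f (P.tag i)| +
            |F (P.t (i+1)) - F (P.tag i) - (P.t (i+1) - P.tag i) * f (P.tag i)| := by
            rw [hrw]; exact abs_sub _ _
        _ ≤ ε' * (P.t (i+1) - P.t i) := by linarith
  have hTbound : ∑ i ∈ T, |g i| ≤ ε / 4 := by
    have h1 : ∑ i ∈ T, |g i| ≤ ∑ i ∈ T, ε' * (P.t (i+1) - P.t i) :=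
      Finset.sum_le_sum htermT
    have h2 : ∑ i ∈ T, ε' * (P.t (i+1) - P.t i)
        ≤ ∑ i ∈ Finset.range P.n, ε' * (P.t (i+1) - P.t i) := by
      apply Finset.sum_le_sum_of_subset_of_nonneg (Finset.filter_subset _ _)
      intro i hi _
      have := P.mono i (Finset.mem_range.mp hi)
      nlinarith
    have h3 : ∑ i ∈ Finset.range P.n, ε' * (P.t (i+1) - P.t i) = ε' * (tt - a) := by
      rw [← Finset.mul_sum, Finset.sum_range_sub (fun i => P.t i) P.n, P.first, P.last]
    have h4 : ε' * (tt - a) ≤ ε / 4 := by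
      have htta : tt - a ≤ b - a := by linarith [htt.2]
      have : ε' * (tt - a) ≤ ε' * (b - a) := by nlinarith
      have h5 : ε' * (b - a) ≤ ε / 4 := by
        rw [hε'def, div_mul_eq_mul_div, div_le_div_iff₀ (by linarith) (by norm_num)]
        nlinarith
      linarith
    linarith
  calc ‖∑ i ∈ Finset.range P.n, g i‖ ≤ ∑ i ∈ Finset.range P.n, |g i| := hnorm
    _ = ∑ i ∈ S, |g i| + ∑ i ∈ T, |g i| := hsplit
    _ ≤ ε / 2 + ε / 4 := by linarith
    _ < ε := by linarith
end

section
/- Let H be a Hilbert space, g : [a,b] → H of bounded variation, and h : [a,b] → ℝ continuous, so that the Henstock–Kurzweil–Stieltjes integral I = HK∫_a^b h(s) dg(s) exists. Suppose in addition that A is a closed, densely defined linear operator on H, that g(s) lies in the domain of A for every s ∈ [a,b], and that the function f(s) = A g(s) is of bounded variation. Then I lies in the domain of A and A I = HK∫_a^b h(s) df(s). -/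
/-- `g : [a,b] → H` is of bounded variation: the sums `Σ ‖g (x_{i+1}) - g (x_i)‖` over
all finite partitions `a = x_0 ≤ x_1 ≤ … ≤ x_n = b` are uniformly bounded. -/
def BVOn {H : Type*} [NormedAddCommGroup H] (g : ℝ → H) (a b : ℝ) : Prop :=
  ∃ M : ℝ, ∀ (n : ℕ) (x : ℕ → ℝ), x 0 = a → x n = b → (∀ i < n, x i ≤ x (i + 1)) →
    ∑ i ∈ Finset.range n, ‖g (x (i + 1)) - g (x i)‖ ≤ M

/-- The Riemann–Stieltjes sum `Σ_i h(τ_i) (g (t_{i+1}) - g (t_i))`. -/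
noncomputable def TaggedPartition.stieltjesSum {a b : ℝ} {H : Type*}
    [AddCommGroup H] [Module ℝ H] (P : TaggedPartition a b) (h : ℝ → ℝ) (g : ℝ → H) : H :=
  ∑ i ∈ Finset.range P.n, h (P.tag i) • (g (P.t (i + 1)) - g (P.t i))

/-- `HK∫_a^b h dg = I` in the Henstock–Kurzweil–Stieltjes sense. -/
def HasHKStieltjesIntegral {H : Type*} [NormedAddCommGroup H] [NormedSpace ℝ H]
    (a b : ℝ) (h : ℝ → ℝ) (g : ℝ → H) (I : H) : Prop :=
  ∀ ε > 0, ∃ δ : ℝ → ℝ, (∀ x ∈ Set.Icc a b, 0 < δ x) ∧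
    ∀ P : TaggedPartition a b, P.IsFine δ → ‖P.stieltjesSum h g - I‖ < ε

open Set Filter Topology

-- Both sides are the increment of `f` over `[t, t'] ∩ [s, s']`, or `0` when it is empty.
lemma sub_max_min_symm {E : Type*} [AddGroup E] (f : ℝ → E) {t t' s s' : ℝ}
    (ht : t ≤ t') (hs : s ≤ s') :
    f (max t (min s' t')) - f (max t (min s t')) =
      f (max s (min t' s')) - f (max s (min t s')) := by
  by_cases hov : s ≤ t' ∧ t ≤ s'
  · rw [max_eq_right (le_min hov.2 ht), max_eq_right (le_min hov.1 hs), min_comm,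
      min_eq_left hov.1, min_eq_left hov.2, max_comm]
  · rw [show max t (min s' t') = max t (min s t') by grind,
      show max s (min t' s') = max s (min t s') by grind, sub_self, sub_self]

lemma max_min_mem_Icc_of_ne {t t' x y : ℝ} (hxy : x ≤ y)
    (hne : max t (min x t') ≠ max t (min y t')) : max t (min y t') ∈ Icc x y := by
  grind

lemma eVariationOn.sum_Icc {α E : Type*} [LinearOrder α] [PseudoEMetricSpace E] (f : α → E)
    {u : ℕ → α} {n : ℕ} (hu : MonotoneOn u (Iic n)) :
    ∑ i ∈ Finset.range n, eVariationOn f (Icc (u i) (u (i + 1))) =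
      eVariationOn f (Icc (u 0) (u n)) := by
  induction n with
  | zero => simp [eVariationOn.subsingleton]
  | succ n ih =>
    have h0n : u 0 ≤ u n := hu (by simp) (by simp) (Nat.zero_le n)
    have hn : u n ≤ u (n + 1) := hu (by simp) (by simp) (Nat.le_succ n)
    rw [Finset.sum_range_succ, ih (hu.mono (Iic_subset_Iic.2 (Nat.le_succ n)))]
    simpa using eVariationOn.Icc_add_Icc f (s := univ) h0n hn (mem_univ _)

lemma BVOn.boundedVariationOn {E : Type*} [NormedAddCommGroup E] {f : ℝ → E} {a b : ℝ}
    (hf : BVOn f a b) : BoundedVariationOn f (Icc a b) := by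
  obtain ⟨M, hM⟩ := hf
  refine ne_top_of_le_ne_top (ENNReal.ofReal_ne_top (r := M))
    (iSup_le fun ⟨n, u, hu, hus⟩ => ?_)
  -- extend `u` by `a` in front and `b` at the back to get a partition of `[a, b]`
  let x : ℕ → ℝ := fun k => if k = 0 then a else if k ≤ n + 1 then u (k - 1) else b
  have hx : ∀ k < n + 2, x k ≤ x (k + 1) := by
    intro k hk
    rcases k with _ | k
    · simp [x, (hus 0).1]
    · by_cases hkn : k + 1 ≤ n
      · simpa [x, hkn, show k ≤ n by omega] using hu (Nat.le_succ k)
      · simp [x, hkn, show k ≤ n by omega, (hus k).2]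
  calc ∑ i ∈ Finset.range n, edist (f (u (i + 1))) (f (u i))
      = ∑ k ∈ Finset.Ico 1 (n + 1), edist (f (x (k + 1))) (f (x k)) := by
        rw [Finset.sum_Ico_eq_sum_range, add_tsub_cancel_right]
        refine Finset.sum_congr rfl fun i hi => ?_
        have : i < n := Finset.mem_range.1 hi
        simp [x, show i + 1 ≤ n by omega, show i ≤ n by omega, add_comm 1 i]
    _ ≤ ∑ k ∈ Finset.range (n + 2), edist (f (x (k + 1))) (f (x k)) := by
        refine Finset.sum_le_sum_of_subset fun k hk => ?_
        simp only [Finset.mem_Ico, Finset.mem_range] at hk ⊢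
        omega
    _ = ENNReal.ofReal (∑ k ∈ Finset.range (n + 2), ‖f (x (k + 1)) - f (x k)‖) := by
        rw [ENNReal.ofReal_sum_of_nonneg fun _ _ => norm_nonneg _]
        simp [edist_dist, dist_eq_norm]
    _ ≤ ENNReal.ofReal M := ENNReal.ofReal_le_ofReal (hM _ x rfl (by simp [x]) hx)

namespace TaggedPartition

section

variable {a b : ℝ} (P : TaggedPartition a b)

lemma monotoneOn_t : MonotoneOn P.t (Iic P.n) :=
  monotoneOn_of_le_succ ordConnected_Iic fun i _ _ hi =>
    P.mono i (Order.succ_le_iff.1 hi)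

lemma t_mem_Icc {i : ℕ} (hi : i ≤ P.n) : P.t i ∈ Icc a b :=
  ⟨P.first.symm.trans_le (P.monotoneOn_t (by simp) hi (Nat.zero_le i)),
    (P.monotoneOn_t hi (by simp) hi).trans_eq P.last⟩

lemma tag_mem_Icc {i : ℕ} (hi : i < P.n) : P.tag i ∈ Icc a b :=
  ⟨(P.t_mem_Icc hi.le).1.trans (P.tag_mem i hi).1, (P.tag_mem i hi).2.trans (P.t_mem_Icc hi).2⟩

lemma IsFine.mono {P : TaggedPartition a b} {δ δ' : ℝ → ℝ} (hP : P.IsFine δ)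
    (hδ : ∀ x, δ x ≤ δ' x) : P.IsFine δ' := fun i hi _ hx =>
  ⟨(sub_le_sub_left (hδ _) _).trans_lt (hP i hi hx).1,
    (hP i hi hx).2.trans_le (add_le_add_right (hδ _) _)⟩

end

def nil (a : ℝ) : TaggedPartition a a where
  n := 0
  t _ := a
  tag _ := a
  first := rfl
  last := rfl
  mono _ hi := absurd hi (Nat.not_lt_zero _)
  tag_mem _ hi := absurd hi (Nat.not_lt_zero _)

lemma nil_isFine (a : ℝ) (δ : ℝ → ℝ) : (nil a).IsFine δ := fun _ hi =>
  absurd hi (Nat.not_lt_zero _)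

section snoc

variable {a x y τ : ℝ} (P : TaggedPartition a x)

def snoc (hxy : x ≤ y) (hτ : τ ∈ Icc x y) : TaggedPartition a y where
  n := P.n + 1
  t i := if i ≤ P.n then P.t i else y
  tag i := if i < P.n then P.tag i else τ
  first := by simp [P.first]
  last := by simp
  mono i hi := by
    rcases (Nat.lt_succ_iff.1 hi).lt_or_eq with hi | rfl
    · simpa [hi.le, Nat.succ_le_of_lt hi] using P.mono i hi
    · simpa [P.last] using hxy
  tag_mem i hi := by
    rcases (Nat.lt_succ_iff.1 hi).lt_or_eq with hi | rfl
    · simpa [hi, hi.le, Nat.succ_le_of_lt hi] using P.tag_mem i hi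
    · simpa [P.last] using hτ

lemma IsFine.snoc {P : TaggedPartition a x} {δ : ℝ → ℝ} (hP : P.IsFine δ) (hxy : x ≤ y)
    (hτ : τ ∈ Icc x y) (hδ : Icc x y ⊆ Ioo (τ - δ τ) (τ + δ τ)) :
    (P.snoc hxy hτ).IsFine δ := by
  intro i hi
  rcases (Nat.lt_succ_iff.1 hi).lt_or_eq with hi | rfl
  · simpa [TaggedPartition.snoc, hi, hi.le, Nat.succ_le_of_lt hi] using hP i hi
  · simpa [TaggedPartition.snoc, P.last] using hδ

end snoc

theorem exists_isFine {a b : ℝ} (hab : a ≤ b) {δ : ℝ → ℝ}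
    (hδ : ∀ x ∈ Icc a b, 0 < δ x) : ∃ P : TaggedPartition a b, P.IsFine δ := by
  let s : Set ℝ := {x | x ∈ Icc a b ∧ ∃ P : TaggedPartition a x, P.IsFine δ}
  have hbdd : BddAbove s := ⟨b, fun x hx => hx.1.2⟩
  have has : a ∈ s := ⟨⟨le_rfl, hab⟩, nil a, nil_isFine a δ⟩
  set c := sSup s
  have hc : c ∈ Icc a b := ⟨le_csSup hbdd has, csSup_le ⟨a, has⟩ fun x hx => hx.1.2⟩
  have hδc := hδ c hc
  obtain ⟨x, hxs, hx⟩ := exists_lt_of_lt_csSup ⟨a, has⟩ (sub_lt_self c hδc)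
  have hxc : x ≤ c := le_csSup hbdd hxs
  -- `[x, y] ⊆ (c - δ c, c + δ c)`, so tagging it at `c` extends a fine partition of `[a, x]`
  have hext : ∀ y, c ≤ y → y < c + δ c → y ≤ b → y ∈ s := by
    intro y hcy hy hyb
    obtain ⟨-, P, hP⟩ := hxs
    exact ⟨⟨hc.1.trans hcy, hyb⟩, P.snoc (hxc.trans hcy) ⟨hxc, hcy⟩,
      hP.snoc _ _ fun z hz => ⟨by linarith [hz.1], by linarith [hz.2]⟩⟩
  have hcb : c = b := by
    by_contra hne
    have hy := le_csSup hbdd (hext (min b (c + δ c / 2)) (le_min hc.2 (by linarith))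
      ((min_le_right _ _).trans_lt (by linarith)) (min_le_left _ _))
    rcases min_choice b (c + δ c / 2) with h | h <;> rw [h] at hy
    · exact hne (le_antisymm hc.2 hy)
    · linarith
  obtain ⟨-, P, hP⟩ := hext c le_rfl (by linarith) hc.2
  rw [← hcb]
  exact ⟨P, hP⟩

def gaugeFilter (a b : ℝ) : Filter (TaggedPartition a b) where
  sets := {s | ∃ δ : ℝ → ℝ, (∀ x ∈ Icc a b, 0 < δ x) ∧ {P | P.IsFine δ} ⊆ s}
  univ_sets := ⟨fun _ => 1, fun _ _ => one_pos, subset_univ _⟩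
  sets_of_superset := by
    rintro s t ⟨δ, hδ, hs⟩ hst
    exact ⟨δ, hδ, hs.trans hst⟩
  inter_sets := by
    rintro s t ⟨δ₁, h₁, hs₁⟩ ⟨δ₂, h₂, hs₂⟩
    refine ⟨fun x => min (δ₁ x) (δ₂ x), fun x hx => lt_min (h₁ x hx) (h₂ x hx),
      fun P hP => ?_⟩
    rw [mem_ofPred_eq] at hP
    exact ⟨hs₁ (IsFine.mono hP fun _ => min_le_left _ _),
      hs₂ (IsFine.mono hP fun _ => min_le_right _ _)⟩

lemma mem_gaugeFilter {a b : ℝ} {s : Set (TaggedPartition a b)} :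
    s ∈ gaugeFilter a b ↔
      ∃ δ : ℝ → ℝ, (∀ x ∈ Icc a b, 0 < δ x) ∧ {P | P.IsFine δ} ⊆ s :=
  Iff.rfl

lemma gaugeFilter_neBot {a b : ℝ} (hab : a ≤ b) : (gaugeFilter a b).NeBot := by
  refine forall_mem_nonempty_iff_neBot.1 fun s hs => ?_
  obtain ⟨δ, hδ, hsub⟩ := mem_gaugeFilter.1 hs
  obtain ⟨P, hP⟩ := exists_isFine hab hδ
  exact ⟨P, hsub hP⟩
section

variable {a b : ℝ} (P Q : TaggedPartition a b)

def clamp (i : ℕ) (x : ℝ) : ℝ := max (P.t i) (min x (P.t (i + 1)))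

lemma monotone_clamp (i : ℕ) : Monotone (P.clamp i) := fun _ _ hxy =>
  max_le_max le_rfl (min_le_min_right _ hxy)

lemma clamp_mem_Icc {i : ℕ} (hi : i < P.n) (x : ℝ) :
    P.clamp i x ∈ Icc (P.t i) (P.t (i + 1)) :=
  ⟨le_max_left _ _, max_le (P.mono i hi) (min_le_right _ _)⟩

lemma sum_sub_clamp {E : Type*} [AddCommGroup E] (f : ℝ → E) {i : ℕ} (hi : i < P.n) :
    ∑ j ∈ Finset.range Q.n, (f (P.clamp i (Q.t (j + 1))) - f (P.clamp i (Q.t j))) =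
      f (P.t (i + 1)) - f (P.t i) := by
  have ha : P.clamp i a = P.t i := max_eq_left ((min_le_left _ _).trans (P.t_mem_Icc hi.le).1)
  have hb : P.clamp i b = P.t (i + 1) := by
    rw [clamp, min_eq_right (P.t_mem_Icc hi).2, max_eq_right (P.mono i hi)]
  rw [Finset.sum_range_sub (fun j => f (P.clamp i (Q.t j))), Q.last, Q.first, ha, hb]

lemma stieltjesSum_eq_sum_sum {E : Type*} [AddCommGroup E] [Module ℝ E] (h : ℝ → ℝ)
    (f : ℝ → E) : P.stieltjesSum h f = ∑ i ∈ Finset.range P.n, ∑ j ∈ Finset.range Q.n,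
      h (P.tag i) • (f (P.clamp i (Q.t (j + 1))) - f (P.clamp i (Q.t j))) := by
  refine Finset.sum_congr rfl fun i hi => ?_
  rw [← Finset.smul_sum, P.sum_sub_clamp Q f (Finset.mem_range.1 hi)]

lemma sub_clamp_comm {E : Type*} [AddGroup E] (f : ℝ → E) {i j : ℕ} (hi : i < P.n)
    (hj : j < Q.n) :
    f (P.clamp i (Q.t (j + 1))) - f (P.clamp i (Q.t j)) =
      f (Q.clamp j (P.t (i + 1))) - f (Q.clamp j (P.t i)) :=
  sub_max_min_symm f (P.mono i hi) (Q.mono j hj)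

lemma sum_edist_clamp_le {E : Type*} [PseudoEMetricSpace E] (f : ℝ → E) :
    ∑ i ∈ Finset.range P.n, ∑ j ∈ Finset.range Q.n,
      edist (f (P.clamp i (Q.t (j + 1)))) (f (P.clamp i (Q.t j))) ≤ eVariationOn f (Icc a b) := by
  calc _ ≤ ∑ i ∈ Finset.range P.n, eVariationOn f (Icc (P.t i) (P.t (i + 1))) := by
        refine Finset.sum_le_sum fun i hi => eVariationOn.sum_le_of_monotoneOn_Iic
          ((P.monotone_clamp i).comp_monotoneOn Q.monotoneOn_t) fun j _ => ?_
        exact P.clamp_mem_Icc (Finset.mem_range.1 hi) _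
    _ = eVariationOn f (Icc a b) := by
        rw [eVariationOn.sum_Icc f P.monotoneOn_t, P.first, P.last]

lemma norm_stieltjesSum_sub_le {E : Type*} [NormedAddCommGroup E] [NormedSpace ℝ E]
    {h : ℝ → ℝ} {f : ℝ → E} {δ ε : ℝ} (hε : 0 ≤ ε)
    (hh : ∀ x ∈ Icc a b, ∀ y ∈ Icc a b, dist x y < 2 * δ → dist (h x) (h y) ≤ ε)
    (hf : BoundedVariationOn f (Icc a b))
    (hP : P.IsFine fun _ => δ) (hQ : Q.IsFine fun _ => δ) :
    ‖P.stieltjesSum h f - Q.stieltjesSum h f‖ ≤ ε * (eVariationOn f (Icc a b)).toReal := by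
  set D : ℕ → ℕ → E := fun i j => f (P.clamp i (Q.t (j + 1))) - f (P.clamp i (Q.t j))
  have hdiff : P.stieltjesSum h f - Q.stieltjesSum h f =
      ∑ i ∈ Finset.range P.n, ∑ j ∈ Finset.range Q.n,
        (h (P.tag i) - h (Q.tag j)) • D i j := by
    rw [P.stieltjesSum_eq_sum_sum Q, Q.stieltjesSum_eq_sum_sum P,
      Finset.sum_comm (s := Finset.range Q.n), ← Finset.sum_sub_distrib]
    refine Finset.sum_congr rfl fun i hi => ?_
    rw [← Finset.sum_sub_distrib]
    refine Finset.sum_congr rfl fun j hj => ?_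
    rw [sub_smul, ← P.sub_clamp_comm Q f (Finset.mem_range.1 hi) (Finset.mem_range.1 hj)]
  have hterm : ∀ i < P.n, ∀ j < Q.n,
      ‖(h (P.tag i) - h (Q.tag j)) • D i j‖ ≤ ε * ‖D i j‖ := by
    intro i hi j hj
    by_cases hD : D i j = 0
    · simp [hD]
    have hne : P.clamp i (Q.t j) ≠ P.clamp i (Q.t (j + 1)) := fun he => hD (by simp [D, he])
    have hxQ : P.clamp i (Q.t (j + 1)) ∈ Icc (Q.t j) (Q.t (j + 1)) :=
      max_min_mem_Icc_of_ne (Q.mono j hj) hne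
    obtain ⟨hP₁, hP₂⟩ := hP i hi (P.clamp_mem_Icc hi _)
    obtain ⟨hQ₁, hQ₂⟩ := hQ j hj hxQ
    have htags : dist (P.tag i) (Q.tag j) < 2 * δ := by
      rw [Real.dist_eq, abs_sub_lt_iff]
      constructor <;> linarith
    rw [norm_smul, ← dist_eq_norm]
    exact mul_le_mul_of_nonneg_right
      (hh _ (P.tag_mem_Icc hi) _ (Q.tag_mem_Icc hj) htags) (norm_nonneg _)
  have hvar : ∑ i ∈ Finset.range P.n, ∑ j ∈ Finset.range Q.n, ‖D i j‖ ≤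
      (eVariationOn f (Icc a b)).toReal := by
    refine (ENNReal.ofReal_le_iff_le_toReal hf).1 ((le_of_eq ?_).trans (P.sum_edist_clamp_le Q f))
    rw [ENNReal.ofReal_sum_of_nonneg fun _ _ => by positivity]
    refine Finset.sum_congr rfl fun i _ => ?_
    rw [ENNReal.ofReal_sum_of_nonneg fun _ _ => norm_nonneg _]
    simp [D, edist_dist, dist_eq_norm]
  calc ‖P.stieltjesSum h f - Q.stieltjesSum h f‖
      ≤ ∑ i ∈ Finset.range P.n, ∑ j ∈ Finset.range Q.n,
          ‖(h (P.tag i) - h (Q.tag j)) • D i j‖ := by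
        rw [hdiff]
        exact (norm_sum_le _ _).trans (Finset.sum_le_sum fun i _ => norm_sum_le _ _)
    _ ≤ ∑ i ∈ Finset.range P.n, ∑ j ∈ Finset.range Q.n, ε * ‖D i j‖ :=
        Finset.sum_le_sum fun i hi => Finset.sum_le_sum fun j hj =>
          hterm i (Finset.mem_range.1 hi) j (Finset.mem_range.1 hj)
    _ ≤ ε * (eVariationOn f (Icc a b)).toReal := by
        simp_rw [← Finset.mul_sum]
        exact mul_le_mul_of_nonneg_left hvar hε

lemma stieltjesSum_mem {X : Type*} [AddCommGroup X] [Module ℝ X] (h : ℝ → ℝ) {g : ℝ → X}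
    {p : Submodule ℝ X} (hg : ∀ x ∈ Icc a b, g x ∈ p) : P.stieltjesSum h g ∈ p :=
  p.sum_mem fun _ hi => p.smul_mem _ <| p.sub_mem
    (hg _ (P.t_mem_Icc (Finset.mem_range.1 hi))) (hg _ (P.t_mem_Icc (Finset.mem_range.1 hi).le))

@[simp]
lemma stieltjesSum_prodMk {X Y : Type*} [AddCommGroup X] [Module ℝ X] [AddCommGroup Y]
    [Module ℝ Y] (h : ℝ → ℝ) (g : ℝ → X) (f : ℝ → Y) :
    P.stieltjesSum h (fun x => (g x, f x)) = (P.stieltjesSum h g, P.stieltjesSum h f) := by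
  ext <;> simp [stieltjesSum, Prod.fst_sum, Prod.snd_sum]

end

end TaggedPartition

lemma hasHKStieltjesIntegral_iff_tendsto {E : Type*} [NormedAddCommGroup E] [NormedSpace ℝ E]
    {a b : ℝ} {h : ℝ → ℝ} {g : ℝ → E} {I : E} :
    HasHKStieltjesIntegral a b h g I ↔
      Tendsto (fun P => P.stieltjesSum h g) (TaggedPartition.gaugeFilter a b) (𝓝 I) := by
  simp only [Metric.tendsto_nhds, dist_eq_norm, Filter.Eventually,
    TaggedPartition.mem_gaugeFilter]
  rfl

theorem exists_hasHKStieltjesIntegral {E : Type*} [NormedAddCommGroup E] [NormedSpace ℝ E]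
    [CompleteSpace E] {a b : ℝ} {h : ℝ → ℝ} {f : ℝ → E} (hab : a ≤ b)
    (hh : ContinuousOn h (Icc a b)) (hf : BVOn f a b) :
    ∃ J, HasHKStieltjesIntegral a b h f J := by
  have := TaggedPartition.gaugeFilter_neBot hab
  simp_rw [hasHKStieltjesIntegral_iff_tendsto]
  refine cauchy_map_iff_exists_tendsto.1 (Metric.cauchy_iff.2 ⟨inferInstance, fun ε hε => ?_⟩)
  set V := (eVariationOn f (Icc a b)).toReal
  have hV : 0 ≤ V := ENNReal.toReal_nonneg
  obtain ⟨η, hη, hhη⟩ := Metric.uniformContinuousOn_iff.1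
    (isCompact_Icc.uniformContinuousOn_of_continuous hh) (ε / (V + 1)) (by positivity)
  refine ⟨_, image_mem_map (s := {P | P.IsFine fun _ => η / 2})
    (TaggedPartition.mem_gaugeFilter.2 ⟨_, fun _ _ => half_pos hη, subset_rfl⟩), ?_⟩
  rintro _ ⟨P, hP, rfl⟩ _ ⟨Q, hQ, rfl⟩
  rw [dist_eq_norm]
  calc _ ≤ ε / (V + 1) * V :=
        P.norm_stieltjesSum_sub_le Q (by positivity)
          (fun x hx y hy hxy => (hhη x hx y hy (by linarith)).le) hf.boundedVariationOn hP hQ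
    _ < ε := by
        rw [div_mul_eq_mul_div, div_lt_iff₀ (by positivity)]
        nlinarith

theorem hk_stieltjes_integral_closed_operator_general
    {H : Type*} [NormedAddCommGroup H] [InnerProductSpace ℂ H] [CompleteSpace H]
    (a b : ℝ) (hab : a ≤ b) (g : ℝ → H) (h : ℝ → ℝ) (f : ℝ → H) (I : H)
    (hh : ContinuousOn h (Set.Icc a b))
    (hI : HasHKStieltjesIntegral a b h g I)
    (A : H →ₗ.[ℂ] H)
    (hclosed : IsClosed (A.graph : Set (H × H)))
    (hdom : ∀ s ∈ Set.Icc a b, g s ∈ A.domain)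
    (hf : ∀ s, ∀ hs : s ∈ Set.Icc a b, f s = A ⟨g s, hdom s hs⟩)
    (hfBV : BVOn f a b) :
    ∃ hI' : I ∈ A.domain, HasHKStieltjesIntegral a b h f (A ⟨I, hI'⟩) := by
  obtain ⟨J, hJ⟩ := exists_hasHKStieltjesIntegral hab hh hfBV
  have := TaggedPartition.gaugeFilter_neBot hab
  have hgraph : ∀ x ∈ Icc a b, (g x, f x) ∈ A.graph.restrictScalars ℝ := fun x hx =>
    hf x hx ▸ A.mem_graph ⟨g x, hdom x hx⟩
  rw [hasHKStieltjesIntegral_iff_tendsto] at hI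
  have hIJ : (I, J) ∈ A.graph := hclosed.mem_of_tendsto
    (hI.prodMk_nhds (hasHKStieltjesIntegral_iff_tendsto.1 hJ))
    (Eventually.of_forall fun P => by simpa using P.stieltjesSum_mem h hgraph)
  obtain ⟨y, hyI, hyJ⟩ := A.mem_graph_iff.1 hIJ
  subst hyI
  exact ⟨y.2, by simpa [hyJ] using hJ⟩

/-- with `g` of bounded variation, `h` continuous and
`I = HK∫_a^b h dg`, if `A` is a closed densely defined linear operator on `H`,
`g(s) ∈ D(A)` for all `s ∈ [a,b]`, and `f = A ∘ g` is of bounded variation, then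
`I ∈ D(A)` and `A I = HK∫_a^b h df`. -/
theorem hk_stieltjes_integral_closed_operator
    {H : Type*} [NormedAddCommGroup H] [InnerProductSpace ℂ H] [CompleteSpace H]
    (a b : ℝ) (hab : a ≤ b) (g : ℝ → H) (h : ℝ → ℝ) (f : ℝ → H) (I : H)
    (hg : BVOn g a b) (hh : ContinuousOn h (Set.Icc a b))
    (hI : HasHKStieltjesIntegral a b h g I)
    (A : H →ₗ.[ℂ] H)
    (hclosed : IsClosed (A.graph : Set (H × H)))
    (hdense : Dense (A.domain : Set H))
    (hdom : ∀ s ∈ Set.Icc a b, g s ∈ A.domain)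
    (hf : ∀ s, ∀ hs : s ∈ Set.Icc a b, f s = A ⟨g s, hdom s hs⟩)
    (hfBV : BVOn f a b) :
    ∃ hI' : I ∈ A.domain, HasHKStieltjesIntegral a b h f (A ⟨I, hI'⟩) :=
  hk_stieltjes_integral_closed_operator_general a b hab g h f I hh hI A hclosed hdom hf hfBV
end

section
/- Let I = [−1/2, 1/2] ⊆ ℝ. For n ∈ ℕ let ℝ_I^n = {x ∈ ℝ^ℕ : x_i ∈ I for all i > n}, let X_1 = ⋃_n ℝ_I^n and X_2 = ℝ^ℕ \ X_1. Let τ be the topology on ℝ^ℕ in which a set is open if and only if it has the form G_1 ∪ G_2, where G_1 is open in the topology on X_1 generated by the sets U × I_n := {x ∈ ℝ^ℕ : (x_1, …, x_n) ∈ U and x_i ∈ I for all i > n} for U ⊆ ℝ^n open and n ∈ ℕ, and G_2 is an arbitrary subset of X_2. If a sequence (y_k) in ℝ^ℕ converges to x in the topology τ, then (y_k) converges to x in the product (Tychonoff) topology on ℝ^ℕ. -/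
/-- The interval `I = [-1/2, 1/2]`. -/
def Icube : Set ℝ := Set.Icc (-(1 / 2) : ℝ) (1 / 2)

/-- `ℝ_I^n`: the sequences whose coordinates beyond the first `n` lie in `I`. -/
def RIn (n : ℕ) : Set (ℕ → ℝ) := {x | ∀ i, n ≤ i → x i ∈ Icube}

/-- `X₁ = ⋃_n ℝ_I^n`. -/
def XOne : Set (ℕ → ℝ) := ⋃ n, RIn n

/-- The basic open sets `U × I_n` with `U ⊆ ℝ^n` open. -/
def IsCylBasic (S : Set (ℕ → ℝ)) : Prop :=
  ∃ (n : ℕ) (U : Set (Fin n → ℝ)), IsOpen U ∧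
    S = {x : ℕ → ℝ | (fun i : Fin n => x (i : ℕ)) ∈ U ∧ ∀ i, n ≤ i → x i ∈ Icube}

/-- The topology generated by the basic sets `U × I_n`. -/
def tauOne : TopologicalSpace (ℕ → ℝ) :=
  TopologicalSpace.generateFrom {S | IsCylBasic S}

/-- The open sets of the direct-sum topology `τ`: sets of the form `G₁ ∪ G₂` where
`G₁ ⊆ X₁` is open in the topology generated by the sets `U × I_n` and `G₂` is an
arbitrary subset of `X₂ = X₁ᶜ`. -/
def IsTauOpen (S : Set (ℕ → ℝ)) : Prop :=
  ∃ G₁ G₂ : Set (ℕ → ℝ), G₁ ⊆ XOne ∧ @IsOpen _ tauOne G₁ ∧ G₂ ⊆ XOneᶜ ∧ S = G₁ ∪ G₂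

/-- convergence of a sequence in the topology `τ` implies convergence in
the product (Tychonoff) topology on `ℝ^ℕ`. -/
theorem tendsto_product_of_tendsto_tau
    (x : ℕ → ℝ) (y : ℕ → ℕ → ℝ)
    (h : ∀ S : Set (ℕ → ℝ), IsTauOpen S → x ∈ S → ∀ᶠ k in Filter.atTop, y k ∈ S) :
    Filter.Tendsto y Filter.atTop (nhds x) := by
  by_cases hx : x ∈ XOne
  · -- x ∈ X₁: use cylinder neighborhoods to get coordinatewise convergence
    obtain ⟨n, hn⟩ := Set.mem_iUnion.mp hx
    rw [tendsto_pi_nhds]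
    intro j
    rw [Metric.tendsto_atTop]
    intro ε hε
    set m := max n (j + 1) with hm
    have hjm : j < m := lt_of_lt_of_le (Nat.lt_succ_self j) (le_max_right _ _)
    set jf : Fin m := ⟨j, hjm⟩ with hjf
    set U : Set (Fin m → ℝ) := (fun u : Fin m → ℝ => u jf) ⁻¹' Metric.ball (x j) ε with hU
    set S : Set (ℕ → ℝ) :=
      {z : ℕ → ℝ | (fun i : Fin m => z (i : ℕ)) ∈ U ∧ ∀ i, m ≤ i → z i ∈ Icube} with hS
    have hopen : IsTauOpen S := by
      refine ⟨S, ∅, ?_, ?_, by simp, by simp⟩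
      · intro z hz
        exact Set.mem_iUnion.mpr ⟨m, hz.2⟩
      · exact TopologicalSpace.GenerateOpen.basic S
          ⟨m, U, (Metric.isOpen_ball).preimage (continuous_apply jf), rfl⟩
    have hxS : x ∈ S := by
      constructor
      · simp [hU, hjf, Metric.mem_ball, hε]
      · intro i hi
        exact hn i (le_trans (le_max_left _ _) hi)
    have := h S hopen hxS
    obtain ⟨N, hN⟩ := Filter.eventually_atTop.mp this
    exact ⟨N, fun k hk => (hN k hk).1⟩
  · -- x ∉ X₁: {x} is τ-open
    have hopen : IsTauOpen {x} := by
      refine ⟨∅, {x}, by simp, ?_, by simpa using hx, by simp⟩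
      exact @isOpen_empty _ tauOne
    have := h {x} hopen rfl
    exact Filter.Tendsto.congr' (this.mono fun k hk => hk.symm) tendsto_const_nhds
end
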